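/- Define k̃_ℓ(x,p,N) = C(N,ℓ)(p/q)^ℓ k_ℓ(x,p,N). For p ∈ (0,1), q = 1-p, 0 ≤ n ≤ N-1 and all real x ∈ [0,N]: Σ_{ℓ=1}^n (2ℓ/N - 1){k̃_ℓ(x,p,N)}² + ((q-p)/q²)(1 - x/N) Σ_{ℓ=0}^{n-1} {k̃_ℓ(x,p,N-1)}² + (1 - x/N){k̃_n(x,p,N-1)}² = 1 - (x/N){k̃_n(x-1,p,N-1)}². -/

import Mathlib

/-
Write r = p/q. Then k̃_j(y,p,M) is the coefficient of t^j in (1 - t)^y (1 + r t)^(M - y)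
= Σ_k [s^k](1 - (1 + r) s)^y · t^k (1 + r t)^(M - k), and for real y we work with this finite
expansion. Multiplying the generating function by 1 + r t, or by 1 - t, gives
k̃_{n+1}(x,N) = k̃_{n+1}(x,N-1) + r k̃_n(x,N-1) = k̃_{n+1}(x-1,N-1) - k̃_n(x-1,N-1), and the
absorption identities of binomial coefficients give a contiguous relation linking k̃_n, k̃_{n+1}
at x and at x - 1. Since (q - p)/q² = 1 - r², N times the increment of the identity from n
to n + 1 is
(2(n+1) - N) A² + (N - x)(k̃_{n+1}² - r² k̃_n²)(x,N-1) + x (k̃_{n+1}² - k̃_n²)(x-1,N-1)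
with A = k̃_{n+1}(x,N); by the two relations above both differences of squares have A as a factor,
and what remains after taking A out is the contiguous relation, so the increment vanishes.
-/

open Finset

noncomputable def poch (a : ℝ) (k : ℕ) : ℝ := ∏ i ∈ Finset.range k, (a + i)

noncomputable def hahnQ (n : ℕ) (x α β : ℝ) (N : ℕ) : ℝ :=
  ∑ k ∈ Finset.range (n + 1),
    poch (-(n : ℝ)) k * poch ((n : ℝ) + α + β + 1) k * poch (-x) k /
      ((Nat.factorial k : ℝ) * poch (α + 1) k * poch (-(N : ℝ)) k)

noncomputable def binomR (a b : ℝ) : ℝ :=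
  Real.Gamma (a + 1) / (Real.Gamma (b + 1) * Real.Gamma (a - b + 1))

noncomputable def hahnWeight (x : ℕ) (α β : ℝ) (N : ℕ) : ℝ :=
  binomR ((x : ℝ) + α) (x : ℝ) * binomR ((N : ℝ) - x + β) ((N : ℝ) - x) /
    binomR ((N : ℝ) + α + β + 1) (N : ℝ)

noncomputable def hahnPi (n : ℕ) (α β : ℝ) (N : ℕ) : ℝ :=
  ((-1 : ℝ) ^ n * poch (-(N : ℝ)) n * poch (α + 1) n * poch (α + β + 1) n) /
      ((Nat.factorial n : ℝ) * poch ((N : ℝ) + α + β + 2) n * poch (β + 1) n) *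
    ((2 * (n : ℝ) + α + β + 1) / (α + β + 1))

noncomputable def kraw (n : ℕ) (x p : ℝ) (N : ℕ) : ℝ :=
  ∑ k ∈ Finset.range (n + 1),
    poch (-(n : ℝ)) k * poch (-x) k / ((Nat.factorial k : ℝ) * poch (-(N : ℝ)) k) * (1 / p) ^ k

noncomputable def dualR (n : ℕ) (lam α β : ℝ) (N : ℕ) : ℝ :=
  ∑ k ∈ Finset.range (n + 1),
    poch (-(n : ℝ)) k * (∏ i ∈ Finset.range k, ((i : ℝ) * (α + β + 1 + i) - lam)) /
      ((Nat.factorial k : ℝ) * poch (α + 1) k * poch (-(N : ℝ)) k)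

noncomputable def ktil (l : ℕ) (x p : ℝ) (N : ℕ) : ℝ :=
  (N.choose l : ℝ) * (p / (1 - p)) ^ l * kraw l x p N

lemma poch_succ (a : ℝ) (k : ℕ) : poch a (k + 1) = poch a k * (a + k) :=
  prod_range_succ _ _

lemma poch_neg_succ (y : ℝ) (k : ℕ) : poch (-y) (k + 1) = -y * poch (-(y - 1)) k := by
  rw [poch, prod_range_succ']
  simp only [Nat.cast_zero, add_zero, mul_comm (-y)]
  congr 1
  exact prod_congr rfl fun i _ => by push_cast; ring

lemma poch_neg_natCast (M k : ℕ) : poch (-(M : ℝ)) k = (-1) ^ k * M.descFactorial k := by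
  induction k with
  | zero => simp [poch]
  | succ k ih =>
    rw [poch_succ, ih, Nat.descFactorial_succ]
    rcases le_or_gt k M with h | h
    · push_cast [h]
      ring
    · simp [Nat.descFactorial_eq_zero_iff_lt.mpr h]

/-- The coefficient of `t ^ k` in `(1 - w * t) ^ y`. -/
noncomputable def binomSeriesCoeff (w y : ℝ) (k : ℕ) : ℝ :=
  w ^ k * poch (-y) k / k.factorial

section binomSeriesCoeff

variable (w y : ℝ) (k : ℕ)

@[simp] lemma binomSeriesCoeff_zero : binomSeriesCoeff w y 0 = 1 := by
  simp [binomSeriesCoeff, poch]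

lemma binomSeriesCoeff_succ :
    binomSeriesCoeff w y (k + 1) =
      binomSeriesCoeff w (y - 1) (k + 1) - w * binomSeriesCoeff w (y - 1) k := by
  rw [binomSeriesCoeff, binomSeriesCoeff, binomSeriesCoeff, poch_neg_succ, poch_succ,
    Nat.factorial_succ]
  push_cast
  field_simp
  ring

lemma mul_binomSeriesCoeff_sub_one :
    w * y * binomSeriesCoeff w (y - 1) k = -(k + 1) * binomSeriesCoeff w y (k + 1) := by
  simp only [binomSeriesCoeff, poch_neg_succ, Nat.factorial_succ]
  push_cast
  field_simp
  ring

lemma mul_binomSeriesCoeff_sub :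
    y * (binomSeriesCoeff w y k - binomSeriesCoeff w (y - 1) k) = k * binomSeriesCoeff w y k := by
  cases k with
  | zero => simp
  | succ k =>
    push_cast
    linear_combination y * binomSeriesCoeff_succ w y k - mul_binomSeriesCoeff_sub_one w y k

end binomSeriesCoeff

/-- The coefficient of `t ^ j` in `∑ k, c k * t ^ k * (1 + r * t) ^ (M - k)`. -/
noncomputable def krawtchoukSum (M j : ℕ) (r : ℝ) (c : ℕ → ℝ) : ℝ :=
  ∑ k ∈ range (j + 1), ((M - k).choose (j - k) : ℝ) * r ^ (j - k) * c k

section krawtchoukSum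

variable {M j : ℕ} (r : ℝ) (c d : ℕ → ℝ)

lemma krawtchoukSum_sub :
    krawtchoukSum M j r (fun k => c k - d k) = krawtchoukSum M j r c - krawtchoukSum M j r d := by
  simp only [krawtchoukSum, mul_sub, sum_sub_distrib]

lemma krawtchoukSum_const_mul (a : ℝ) :
    krawtchoukSum M j r (fun k => a * c k) = a * krawtchoukSum M j r c := by
  simp only [krawtchoukSum, mul_sum]
  exact sum_congr rfl fun _ _ => by ring

lemma krawtchoukSum_succ_succ (h : j ≤ M) :
    krawtchoukSum (M + 1) (j + 1) r c =
      krawtchoukSum M (j + 1) r c + r * krawtchoukSum M j r c := by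
  simp only [krawtchoukSum, sum_range_succ _ (j + 1), Nat.sub_self, Nat.choose_zero_right, mul_sum]
  rw [add_right_comm, ← sum_add_distrib]
  congr 1
  refine sum_congr rfl fun k hk => ?_
  have hkj : k ≤ j := Nat.lt_succ_iff.mp (mem_range.mp hk)
  rw [show M + 1 - k = M - k + 1 by omega, show j + 1 - k = j - k + 1 by omega,
    Nat.choose_succ_succ', pow_succ]
  push_cast
  ring

lemma krawtchoukSum_succ_succ_of_zero (hc : c 0 = 0) :
    krawtchoukSum (M + 1) (j + 1) r c = krawtchoukSum M j r (fun k => c (k + 1)) := by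
  simp [krawtchoukSum, sum_range_succ' _ (j + 1), hc]

lemma succ_mul_krawtchoukSum (h : j ≤ M) :
    (j + 1) * krawtchoukSum M (j + 1) r c =
      krawtchoukSum M (j + 1) r (fun k => k * c k) + r * (M - j) * krawtchoukSum M j r c := by
  have hterm : ∀ k ∈ range (j + 1),
      (j + 1) * (((M - k).choose (j + 1 - k) : ℝ) * r ^ (j + 1 - k) * c k) =
        ((M - k).choose (j + 1 - k) : ℝ) * r ^ (j + 1 - k) * (k * c k) +
          r * (M - j) * (((M - k).choose (j - k) : ℝ) * r ^ (j - k) * c k) := by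
    intro k hk
    have hkj : k ≤ j := Nat.lt_succ_iff.mp (mem_range.mp hk)
    have habs := Nat.choose_succ_right_eq (M - k) (j - k)
    rw [show M - k - (j - k) = M - j by omega] at habs
    rw [show j + 1 - k = j - k + 1 by omega, pow_succ]
    have hcast : ((j - k + 1 : ℕ) : ℝ) = j + 1 - k := by push_cast [hkj]; ring
    have hcast' : ((M - j : ℕ) : ℝ) = M - j := by push_cast [h]; ring
    have := congrArg (fun n : ℕ => (n : ℝ)) habs
    push_cast [hcast, hcast'] at this
    linear_combination r ^ (j - k) * r * c k * this
  simp only [krawtchoukSum, sum_range_succ _ (j + 1), Nat.sub_self, Nat.choose_zero_right, mul_sum,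
    mul_add]
  rw [sum_congr rfl hterm, sum_add_distrib]
  push_cast
  ring

end krawtchoukSum

section contiguous

variable {M j : ℕ} (r x : ℝ)

lemma krawtchoukSum_succ_succ_sub_one (h : j ≤ M) :
    krawtchoukSum (M + 1) (j + 1) r (binomSeriesCoeff (1 + r) x) =
      krawtchoukSum M (j + 1) r (binomSeriesCoeff (1 + r) (x - 1)) -
        krawtchoukSum M j r (binomSeriesCoeff (1 + r) (x - 1)) := by
  have hdiff : krawtchoukSum (M + 1) (j + 1) r
      (fun k => binomSeriesCoeff (1 + r) (x - 1) k - binomSeriesCoeff (1 + r) x k) =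
        (1 + r) * krawtchoukSum M j r (binomSeriesCoeff (1 + r) (x - 1)) := by
    rw [krawtchoukSum_succ_succ_of_zero _ _ (by simp), ← krawtchoukSum_const_mul]
    congr 1
    funext k
    rw [binomSeriesCoeff_succ (1 + r) x k]
    ring
  rw [krawtchoukSum_sub, krawtchoukSum_succ_succ _ _ h] at hdiff
  linear_combination -hdiff

lemma krawtchoukSum_contiguous (h : j ≤ M) :
    (2 * (j + 1) - x) * krawtchoukSum M (j + 1) r (binomSeriesCoeff (1 + r) x) +
        r * (2 * (j + 1) - 2 * (M + 1) + x) * krawtchoukSum M j r (binomSeriesCoeff (1 + r) x) +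
        x * (krawtchoukSum M (j + 1) r (binomSeriesCoeff (1 + r) (x - 1)) +
          krawtchoukSum M j r (binomSeriesCoeff (1 + r) (x - 1))) = 0 := by
  set T : ℕ → ℝ := fun i => krawtchoukSum M i r (fun k => k * binomSeriesCoeff (1 + r) x k)
  have hsub : ∀ i, x * (krawtchoukSum M i r (binomSeriesCoeff (1 + r) x) -
      krawtchoukSum M i r (binomSeriesCoeff (1 + r) (x - 1))) = T i := fun i => by
    rw [← krawtchoukSum_sub, ← krawtchoukSum_const_mul]
    exact congrArg _ (funext fun k => mul_binomSeriesCoeff_sub _ _ k)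
  have hshift : (1 + r) * x * krawtchoukSum M j r (binomSeriesCoeff (1 + r) (x - 1)) =
      -(T (j + 1) + r * T j) := by
    rw [← krawtchoukSum_succ_succ _ _ h, krawtchoukSum_succ_succ_of_zero _ _ (by simp),
      ← krawtchoukSum_const_mul, ← neg_one_mul, ← krawtchoukSum_const_mul]
    refine congrArg _ (funext fun k => ?_)
    rw [mul_binomSeriesCoeff_sub_one]
    push_cast
    ring
  linear_combination 2 * succ_mul_krawtchoukSum r (binomSeriesCoeff (1 + r) x) h - hsub (j + 1) +
    r * hsub j + hshift

end contiguous

section ktil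

variable {p : ℝ} (hp₀ : p ≠ 0) (hp₁ : p ≠ 1)
include hp₀ hp₁

lemma ktil_eq_krawtchoukSum {j M : ℕ} (h : j ≤ M) (y : ℝ) :
    ktil j y p M = krawtchoukSum M j (p / (1 - p)) (binomSeriesCoeff (1 + p / (1 - p)) y) := by
  rw [ktil, kraw, krawtchoukSum, mul_sum]
  refine sum_congr rfl fun k hk => ?_
  have hkj : k ≤ j := Nat.lt_succ_iff.mp (mem_range.mp hk)
  have hchoose :
      (M.choose j : ℝ) * j.descFactorial k = (M - k).choose (j - k) * M.descFactorial k := by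
    rw [Nat.descFactorial_eq_factorial_mul_choose, Nat.descFactorial_eq_factorial_mul_choose]
    have := congrArg (fun n : ℕ => (n : ℝ)) (Nat.choose_mul (n := M) hkj)
    push_cast at this ⊢
    linear_combination (k.factorial : ℝ) * this
  have hpow :
      (p / (1 - p)) ^ j * (1 / p) ^ k = (p / (1 - p)) ^ (j - k) * (1 + p / (1 - p)) ^ k := by
    rw [← pow_sub_mul_pow _ hkj, mul_assoc, ← mul_pow]
    congr 2
    field_simp
    ring
  have hM : (M.descFactorial k : ℝ) ≠ 0 := by
    exact_mod_cast (Nat.descFactorial_pos.mpr (hkj.trans h)).ne'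
  rw [binomSeriesCoeff, poch_neg_natCast, poch_neg_natCast]
  calc _ = (M.choose j : ℝ) * j.descFactorial k / M.descFactorial k *
        ((p / (1 - p)) ^ j * (1 / p) ^ k) * (poch (-y) k / k.factorial) := by
        field_simp
    _ = _ := by
        rw [hchoose, hpow]
        field_simp

variable {j M : ℕ} (h : j + 1 ≤ M)
include h

lemma ktil_succ_succ (y : ℝ) :
    ktil (j + 1) y p (M + 1) = ktil (j + 1) y p M + p / (1 - p) * ktil j y p M := by
  rw [ktil_eq_krawtchoukSum hp₀ hp₁ (h.trans M.le_succ) y,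
    ktil_eq_krawtchoukSum hp₀ hp₁ h, ktil_eq_krawtchoukSum hp₀ hp₁ (j.le_succ.trans h)]
  exact krawtchoukSum_succ_succ _ _ (j.le_succ.trans h)

lemma ktil_succ_succ_sub_one (x : ℝ) :
    ktil (j + 1) x p (M + 1) = ktil (j + 1) (x - 1) p M - ktil j (x - 1) p M := by
  rw [ktil_eq_krawtchoukSum hp₀ hp₁ (h.trans M.le_succ) x,
    ktil_eq_krawtchoukSum hp₀ hp₁ h, ktil_eq_krawtchoukSum hp₀ hp₁ (j.le_succ.trans h)]
  exact krawtchoukSum_succ_succ_sub_one _ _ (j.le_succ.trans h)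

lemma ktil_contiguous (x : ℝ) :
    (2 * (j + 1) - x) * ktil (j + 1) x p M +
        p / (1 - p) * (2 * (j + 1) - 2 * (M + 1) + x) * ktil j x p M +
        x * (ktil (j + 1) (x - 1) p M + ktil j (x - 1) p M) = 0 := by
  rw [ktil_eq_krawtchoukSum hp₀ hp₁ h, ktil_eq_krawtchoukSum hp₀ hp₁ h,
    ktil_eq_krawtchoukSum hp₀ hp₁ (j.le_succ.trans h),
    ktil_eq_krawtchoukSum hp₀ hp₁ (j.le_succ.trans h)]
  exact krawtchoukSum_contiguous _ _ (j.le_succ.trans h)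

end ktil

@[simp] lemma ktil_zero (y p : ℝ) (M : ℕ) : ktil 0 y p M = 1 := by
  simp [ktil, kraw, poch]

theorem krawtchouk_identity_d_general (N : ℕ) (p : ℝ) (hp : p ∈ Set.Ioo (0 : ℝ) 1)
    (n : ℕ) (hn : n ≤ N - 1) (x : ℝ) :
    (∑ l ∈ Finset.Icc 1 n, (2 * (l : ℝ) / N - 1) * ktil l x p N ^ 2) +
        ((1 - p) - p) / (1 - p) ^ 2 * (1 - x / N) *
          (∑ l ∈ Finset.range n, ktil l x p (N - 1) ^ 2) +
        (1 - x / N) * ktil n x p (N - 1) ^ 2 =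
      1 - x / N * ktil n (x - 1) p (N - 1) ^ 2 := by
  have hp₀ : p ≠ 0 := hp.1.ne'
  have hp₁ : p ≠ 1 := hp.2.ne
  induction n with
  | zero => simp
  | succ n ih =>
    obtain ⟨M, rfl⟩ : ∃ M, N = M + 1 := ⟨N - 1, by omega⟩
    rw [Nat.add_sub_cancel] at hn ih ⊢
    have hB := ktil_succ_succ hp₀ hp₁ hn x
    have hD := ktil_succ_succ_sub_one hp₀ hp₁ hn x
    have hC := ktil_contiguous hp₀ hp₁ hn x
    rw [sum_Icc_succ_top (by omega), sum_range_succ]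
    have ih := ih (by omega)
    push_cast at ih hC ⊢
    set A := ktil (n + 1) x p (M + 1)
    set a := ktil (n + 1) x p M
    set b := ktil n x p M
    set c := ktil (n + 1) (x - 1) p M
    set d := ktil n (x - 1) p M
    linear_combination (norm := (field_simp; ring)) ih + A / (M + 1) * hC +
      (A * (2 * (n + 1) - (M + 1)) - (M + 1 - x) * (a - p / (1 - p) * b)) / (M + 1) * hB -
      x * (c + d) / (M + 1) * hD

theorem krawtchouk_identity_d (N : ℕ) (hN : 1 ≤ N) (p : ℝ) (hp : p ∈ Set.Ioo (0 : ℝ) 1)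
    (n : ℕ) (hn : n ≤ N - 1) (x : ℝ) (hx : x ∈ Set.Icc (0 : ℝ) N) :
    (∑ l ∈ Finset.Icc 1 n, (2 * (l : ℝ) / N - 1) * ktil l x p N ^ 2) +
        ((1 - p) - p) / (1 - p) ^ 2 * (1 - x / N) *
          (∑ l ∈ Finset.range n, ktil l x p (N - 1) ^ 2) +
        (1 - x / N) * ktil n x p (N - 1) ^ 2 =
      1 - x / N * ktil n (x - 1) p (N - 1) ^ 2 :=
  krawtchouk_identity_d_general N p hp n hn x
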